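/- Let p = 2 and let a be the binary adding machine (odometer) on (ZMod 2)^ℕ. Then f_0 ∘ a⁻¹ = f_0, and for every n ≥ 1 and every x ∈ (ZMod 2)^ℕ one has f_n(a⁻¹(x)) = f_n(x) + f_{n−1}(x). In other words, the matrix of the adding machine in the ordered basis (f_0, f_1, f_2, …) is the infinite Jordan cell with 1's on the main diagonal and on the first superdiagonal and 0's elsewhere. -/

import Mathlib

/-- For `p = 2`: `b_0 = 1` (the constant one function) and `b_1 = δ_0`,
i.e. `b_1(t) = 1 + t`. -/
def bFun2 : ℕ → ZMod 2 → ZMod 2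
  | 0 => fun _ => 1
  | _ + 1 => fun t => 1 + t

/-- `f_n(x) = Π_i b_{k_i}(x_i)`, where `k_0, k_1, …` are the binary digits of `n`
(the digit `k_i = n / 2^i % 2` vanishes for `i > n`, so the product below captures all of
them; the remaining factors equal `b_0 = 1`). -/
def fBasis2 (n : ℕ) : (ℕ → ZMod 2) → ZMod 2 :=
  fun x => ∏ i ∈ Finset.range (n + 1), bFun2 (n / 2 ^ i % 2) (x i)

/-!
Substituting `x = a y`, the claim is `f_n y = f_n (a y) + f_{n-1} (a y)`. Write `y = (y₀, y')` with
`y'` the tail of `y`. Then `f_n y = b_{n % 2}(y₀) · f_{n / 2}(y')`, and `a` flips `y₀` and, exactly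
when `y₀ = 1`, carries into `y'`, i.e. acts on `y'` as `a` again. Of the four cases (parity of `n`,
value of `y₀`) only the carry case with `n` even is not immediate, and there the claim reduces to
itself for `n / 2`, so it follows by strong induction on `n`.
-/

open Finset

lemma zmod_two_eq_zero_or_eq_one (t : ZMod 2) : t = 0 ∨ t = 1 := by
  revert t; decide

lemma bFun2_zero (t : ZMod 2) : bFun2 0 t = 1 := rfl

lemma bFun2_one (t : ZMod 2) : bFun2 1 t = 1 + t := rfl

lemma fBasis2_eq_prod_range {n N : ℕ} (hN : n < 2 ^ N) (x : ℕ → ZMod 2) :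
    fBasis2 n x = ∏ i ∈ range N, bFun2 (n / 2 ^ i % 2) (x i) := by
  have hfactor : ∀ i, n < 2 ^ i → bFun2 (n / 2 ^ i % 2) (x i) = 1 := fun i hi => by
    rw [Nat.div_eq_of_lt hi, Nat.zero_mod, bFun2_zero]
  have hsubset {M M' : ℕ} (hM : n < 2 ^ M) (hle : M ≤ M') :
      ∏ i ∈ range M, bFun2 (n / 2 ^ i % 2) (x i) =
        ∏ i ∈ range M', bFun2 (n / 2 ^ i % 2) (x i) :=
    prod_subset (range_subset_range.2 hle) fun i _ hi =>
      hfactor i (hM.trans_le (Nat.pow_le_pow_right two_pos (by simpa using hi)))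
  rcases le_total N (n + 1) with hle | hle
  · exact (hsubset hN hle).symm
  · exact hsubset (Nat.lt_two_pow_self.trans_le (Nat.pow_le_pow_right two_pos n.le_succ)) hle

lemma fBasis2_eq_mul_tail (n : ℕ) (x : ℕ → ZMod 2) :
    fBasis2 n x = bFun2 (n % 2) (x 0) * fBasis2 (n / 2) (fun i => x (i + 1)) := by
  have hn : n / 2 < 2 ^ n := (Nat.div_le_self n 2).trans_lt Nat.lt_two_pow_self
  rw [fBasis2_eq_prod_range hn, fBasis2, prod_range_succ', mul_comm]
  simp only [pow_zero, Nat.div_one, pow_succ', ← Nat.div_div_eq_div_mul]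

lemma fBasis2_two_mul (m : ℕ) (x : ℕ → ZMod 2) :
    fBasis2 (2 * m) x = fBasis2 m (fun i => x (i + 1)) := by
  rw [fBasis2_eq_mul_tail, Nat.mul_mod_right, bFun2_zero, one_mul,
    Nat.mul_div_cancel_left m two_pos]

lemma fBasis2_two_mul_add_one (m : ℕ) (x : ℕ → ZMod 2) :
    fBasis2 (2 * m + 1) x = (1 + x 0) * fBasis2 m (fun i => x (i + 1)) := by
  rw [fBasis2_eq_mul_tail, Nat.mul_add_mod, bFun2_one]
  congr 2
  omega

/-- Adding `1` with carry: a carry reaches digit `i` exactly when all lower digits are `1`. -/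
def binaryOdometer (x : ℕ → ZMod 2) (i : ℕ) : ZMod 2 :=
  if ∀ j < i, x j = 1 then x i + 1 else x i

lemma binaryOdometer_zero (x : ℕ → ZMod 2) : binaryOdometer x 0 = x 0 + 1 := by
  simp [binaryOdometer]

lemma binaryOdometer_tail_of_eq_zero {x : ℕ → ZMod 2} (hx : x 0 = 0) :
    (fun i => binaryOdometer x (i + 1)) = fun i => x (i + 1) := by
  ext i
  simp only [binaryOdometer, Nat.forall_lt_succ_left, hx]
  simp

lemma binaryOdometer_tail_of_eq_one {x : ℕ → ZMod 2} (hx : x 0 = 1) :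
    (fun i => binaryOdometer x (i + 1)) = binaryOdometer (fun i => x (i + 1)) := by
  ext i
  simp only [binaryOdometer, Nat.forall_lt_succ_left, hx]
  simp

lemma eq_binaryOdometer (a : (ℕ → ZMod 2) → ℕ → ZMod 2)
    (ha : ∀ (x : ℕ → ZMod 2) (k : ℕ), (∀ i < k, x i = 1) → x k = 0 →
      ((∀ i < k, a x i = 0) ∧ a x k = 1 ∧ ∀ i, k < i → a x i = x i))
    (hone : a (fun _ => 1) = fun _ => 0) (x : ℕ → ZMod 2) :
    a x = binaryOdometer x := by
  by_cases hall : ∀ i, x i = 1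
  · obtain rfl : x = fun _ => 1 := funext hall
    ext i
    simp only [hone, binaryOdometer, implies_true, if_true]
    decide
  obtain ⟨k, hk, hbelow⟩ : ∃ k, x k = 0 ∧ ∀ i < k, x i = 1 := by
    classical
    have hzero : ∃ k, x k = 0 :=
      (not_forall.mp hall).imp fun k => (zmod_two_eq_zero_or_eq_one (x k)).resolve_right
    exact ⟨Nat.find hzero, Nat.find_spec hzero, fun i hi =>
      (zmod_two_eq_zero_or_eq_one (x i)).resolve_left (Nat.find_min hzero hi)⟩
  obtain ⟨hlt, hk', hgt⟩ := ha x k hbelow hk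
  ext i
  rcases lt_trichotomy i k with hi | rfl | hi
  · have hcarry : ∀ j < i, x j = 1 := fun j hj => hbelow j (hj.trans hi)
    rw [binaryOdometer, if_pos hcarry, hlt i hi, hbelow i hi]
    decide
  · rw [binaryOdometer, if_pos hbelow, hk', hk, zero_add]
  · have hcarry : ¬ ∀ j < i, x j = 1 := fun h => by simpa [hk] using h k hi
    simp [binaryOdometer, hgt i hi, hcarry]

theorem fBasis2_succ_eq_binaryOdometer (n : ℕ) (x : ℕ → ZMod 2) :
    fBasis2 (n + 1) x = fBasis2 (n + 1) (binaryOdometer x) + fBasis2 n (binaryOdometer x) := by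
  induction n using Nat.strong_induction_on generalizing x with
  | _ n ih =>
  have htwo : (1 + 1 : ZMod 2) = 0 := rfl
  obtain ⟨m, rfl | rfl⟩ := Nat.even_or_odd' n
  · rw [fBasis2_two_mul_add_one, fBasis2_two_mul_add_one, fBasis2_two_mul, binaryOdometer_zero]
    rcases zmod_two_eq_zero_or_eq_one (x 0) with h0 | h0
    · rw [binaryOdometer_tail_of_eq_zero h0, h0]
      simp [htwo]
    · rw [binaryOdometer_tail_of_eq_one h0, h0, htwo]
      simp [CharTwo.add_self_eq_zero]
  · rw [show 2 * m + 1 + 1 = 2 * (m + 1) by ring, fBasis2_two_mul, fBasis2_two_mul,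
      fBasis2_two_mul_add_one, binaryOdometer_zero]
    rcases zmod_two_eq_zero_or_eq_one (x 0) with h0 | h0
    · rw [binaryOdometer_tail_of_eq_zero h0, h0]
      simp [htwo]
    · rw [binaryOdometer_tail_of_eq_one h0, h0, htwo]
      simpa using ih m (by omega) (fun i => x (i + 1))

/-- for the binary adding machine `a` (the odometer on `(ZMod 2)^ℕ`),
`f_0 ∘ a⁻¹ = f_0` and `f_n ∘ a⁻¹ = f_n + f_{n−1}` for all `n ≥ 1`; i.e. the matrix of
the adding machine in the ordered basis `(f_0, f_1, f_2, …)` is the infinite Jordan cell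
with `1`s on the main diagonal and the first superdiagonal and `0`s elsewhere. -/
theorem addingMachine_jordan_cell
    (a : Equiv.Perm (ℕ → ZMod 2))
    (ha : ∀ (x : ℕ → ZMod 2) (k : ℕ), (∀ i < k, x i = 1) → x k = 0 →
      ((∀ i < k, a x i = 0) ∧ a x k = 1 ∧ ∀ i, k < i → a x i = x i))
    (hone : a (fun _ => 1) = fun _ => 0) :
    ((fun x => fBasis2 0 (a.symm x)) = fBasis2 0) ∧
    ∀ n : ℕ, 1 ≤ n → ∀ x : ℕ → ZMod 2,
      fBasis2 n (a.symm x) = fBasis2 n x + fBasis2 (n - 1) x := by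
  refine ⟨rfl, fun n hn x => ?_⟩
  obtain ⟨m, rfl⟩ := Nat.exists_eq_add_of_le' hn
  have h := fBasis2_succ_eq_binaryOdometer m (a.symm x)
  rwa [← eq_binaryOdometer a ha hone, Equiv.apply_symm_apply] at h
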